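/- arXiv:0807.3046 — 7 statements merged into one kernel-verified Lean document; each statement's English description precedes it below -/
import Mathlib

section
/- Let S be a finite alphabet and let γ : S → S → S satisfy γ y (γ y x) = x for all x, y ∈ S. Then for every local rule f of neighborhood size β, the map on pairs of configurations (a, b) ↦ (F_{f,γ}(a, b), a) is a bijection of (ZMod N → S) × (ZMod N → S). -/
/-- The `r`-neighborhood of a configuration `a : ZMod N → S` at site `i`:
the function `j ↦ a (i + j - r)` on `Fin (2r+1)`. -/
def nbhd {S : Type*} {N : ℕ} (r : ℕ) (a : ZMod N → S) (i : ZMod N) :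
    Fin (2 * r + 1) → S :=
  fun j => a (i + ((j : ℕ) : ZMod N) - (r : ZMod N))

/-- The second-order update `F_{f,γ}` induced by a local rule `f` of neighborhood
size `β` and a combiner `γ`. -/
def secondOrderUpdate {S : Type*} {N : ℕ} {β : ℕ}
    (f : (Fin (2 * β + 1) → S) → S) (γ : S → S → S)
    (a b : ZMod N → S) : ZMod N → S :=
  fun i => γ (f (nbhd β a i)) (b i)

/-- The total energy `E_ε(a, b) = ∑ i, ε (α-neighborhood of a at i) (b i)`. -/
noncomputable def totalEnergy {S : Type*} {N : ℕ} [NeZero N] {α : ℕ}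
    (ε : (Fin (2 * α + 1) → S) → S → ℝ) (a b : ZMod N → S) : ℝ :=
  ∑ i : ZMod N, ε (nbhd α a i) (b i)

/-- `ε` is a conserved density for `(f, γ)` on the periodic lattice of size `N`. -/
def IsConservedDensity {S : Type*} {β α : ℕ} (N : ℕ) [NeZero N]
    (f : (Fin (2 * β + 1) → S) → S) (γ : S → S → S)
    (ε : (Fin (2 * α + 1) → S) → S → ℝ) : Prop :=
  ∀ a b : ZMod N → S,
    totalEnergy ε (secondOrderUpdate f γ a b) a = totalEnergy ε a b

/-- `ψ(f, γ, N, α)`: the set of all conserved densities of size `α` for `(f, γ)`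
on the periodic lattice of size `N`. -/
def psi {S : Type*} {β : ℕ} (f : (Fin (2 * β + 1) → S) → S) (γ : S → S → S)
    (N : ℕ) [NeZero N] (α : ℕ) : Set ((Fin (2 * α + 1) → S) → S → ℝ) :=
  {ε | IsConservedDensity N f γ ε}
/-- `(a, b) ↦ (F_{f,γ}(a, b), a)` is a bijection on pairs of
configurations. -/
theorem secondOrderUpdate_pair_bijective {S : Type*} [Fintype S] {N : ℕ} [NeZero N]
    {β : ℕ} (γ : S → S → S) (hγ : ∀ x y : S, γ y (γ y x) = x)
    (f : (Fin (2 * β + 1) → S) → S) :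
    Function.Bijective
      (fun p : (ZMod N → S) × (ZMod N → S) =>
        (secondOrderUpdate f γ p.1 p.2, p.1)) := by
  apply Function.bijective_iff_has_inverse.mpr
  refine ⟨fun q => (q.2, secondOrderUpdate f γ q.2 q.1), ?_, ?_⟩
  · rintro ⟨a, b⟩
    simp only [secondOrderUpdate]
    exact Prod.ext rfl (funext fun i => hγ _ _)
  · rintro ⟨a, b⟩
    simp only [secondOrderUpdate]
    exact Prod.ext (funext fun i => hγ _ _) rfl
end

section
/- (Lemma 2 of the paper.) For every local rule f of neighborhood size β, every combiner γ, and every α ∈ ℕ, there exists a positive natural number N₀ such that ψ(f, γ, N₀, α) = ψ(f, γ, N₀ + 1, α). -/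
/-! ### Auxiliary theory: window sums of cyclic words -/

namespace PsiStab

variable {A : Type*}

section core

variable (r : ℕ) (Δ : (Fin (2*r+1) → A) → ℝ)

/-- Sum of a local function over all windows of a cyclic word of length `N`,
presented as an `N`-periodic function `ℕ → A`. -/
noncomputable def wsum (N : ℕ) (C : ℕ → A) : ℝ :=
  ∑ t ∈ Finset.range N, Δ (fun j => C (t + (j : ℕ)))

variable {r}

lemma per_mod {C : ℕ → A} {p : ℕ} (h : ∀ x, C (x + p) = C x) (x : ℕ) :
    C (x % p) = C x := by
  have key : ∀ k y, C (y + p * k) = C y := by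
    intro k
    induction k with
    | zero => simp
    | succ k ih => intro y; rw [Nat.mul_succ, ← Nat.add_assoc, h, ih]
  conv_rhs => rw [← Nat.mod_add_div x p, key]

/-- Splice two cyclic words along their common prefix of length `2r+1`. -/
def spliceW (p q : ℕ) (C D : ℕ → A) : ℕ → A :=
  fun x => if x % (p+q) < p then C (x % (p+q)) else D (x % (p+q) - p)

lemma spliceW_per (p q : ℕ) (C D : ℕ → A) (x : ℕ) :
    spliceW p q C D (x + (p+q)) = spliceW p q C D x := by
  simp [spliceW, Nat.add_mod_right]

lemma wsum_splice {p q : ℕ} (hp : 2*r+1 ≤ p) (hq : 2*r+1 ≤ q)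
    {C D : ℕ → A} (hC : ∀ x, C (x+p) = C x) (hD : ∀ x, D (x+q) = D x)
    (hagree : ∀ x, x < 2*r+1 → C x = D x) :
    wsum r Δ (p+q) (spliceW p q C D) = wsum r Δ p C + wsum r Δ q D := by
  unfold wsum
  rw [Finset.sum_range_add]
  congr 1
  · refine Finset.sum_congr rfl fun t ht => ?_
    rw [Finset.mem_range] at ht
    congr 1
    funext j
    have hj : (j : ℕ) < 2*r+1 := j.isLt
    show spliceW p q C D (t + (j:ℕ)) = C (t + (j:ℕ))
    set x := t + (j:ℕ) with hx
    have hxlt : x < p + q := by omega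
    unfold spliceW
    rw [Nat.mod_eq_of_lt hxlt]
    by_cases hxp : x < p
    · simp [hxp]
    · simp only [hxp, if_false]
      have h1 : x - p < 2*r+1 := by omega
      rw [← hagree _ h1]
      calc C (x - p) = C ((x - p) + p) := (hC _).symm
        _ = C x := by rw [show x - p + p = x by omega]
  · refine Finset.sum_congr rfl fun t ht => ?_
    rw [Finset.mem_range] at ht
    congr 1
    funext j
    have hj : (j : ℕ) < 2*r+1 := j.isLt
    show spliceW p q C D (p + t + (j:ℕ)) = D (t + (j:ℕ))
    set x := p + t + (j:ℕ) with hx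
    unfold spliceW
    by_cases hxlt : x < p + q
    · rw [Nat.mod_eq_of_lt hxlt]
      have hxp : ¬ x < p := by omega
      simp only [hxp, if_false]
      congr 1
      omega
    · have h2 : x % (p+q) = x - (p+q) := by
        rw [Nat.mod_eq_sub_mod (by omega), Nat.mod_eq_of_lt (by omega)]
      rw [h2]
      have h3 : x - (p+q) < p := by omega
      simp only [h3, if_true]
      rw [hagree _ (by omega)]
      calc D (x - (p+q)) = D ((x - (p+q)) + q) := (hD _).symm
        _ = D (t + (j:ℕ)) := by rw [show x - (p+q) + q = t + (j:ℕ) by omega]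

end core

section beta

variable {r : ℕ} (Δ : (Fin (2*r+1) → A) → ℝ)

/-- A bridge word of length `p`: the first `2r+1` letters of `W`, padded with `W 0`. -/
def bridge (r : ℕ) (W : ℕ → A) (p : ℕ) : ℕ → A :=
  fun x => if x % p < 2*r+1 then W (x % p) else W 0

lemma bridge_per (W : ℕ → A) (p : ℕ) (x : ℕ) :
    bridge r W p (x + p) = bridge r W p x := by
  simp [bridge, Nat.add_mod_right]

lemma bridge_agree (W : ℕ → A) {p : ℕ} (hp : 2*r+1 ≤ p) {x : ℕ} (hx : x < 2*r+1) :
    bridge r W p x = W x := by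
  have h : x % p = x := Nat.mod_eq_of_lt (by omega)
  simp [bridge, h, hx]

variable (W : ℕ → A) {m : ℕ}
variable (H : ∀ C : ℕ → A, (∀ x, C (x + m) = C x) → wsum r Δ m C = 0)

noncomputable def bet (p : ℕ) : ℝ := wsum r Δ p (bridge r W p)

include H

lemma bet_pair {p q : ℕ} (hp : 2*r+1 ≤ p) (hq : 2*r+1 ≤ q) (hpq : p + q = m) :
    bet Δ W p + bet Δ W q = 0 := by
  have hsp := wsum_splice (Δ := Δ) hp hq (bridge_per W p) (bridge_per W q)
    (fun x hx => by rw [bridge_agree W hp hx, bridge_agree W hq hx])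
  have hH := H (spliceW p q (bridge r W p) (bridge r W q))
    (fun x => by conv in (x + m) => rw [← hpq]
                 exact spliceW_per _ _ _ _ x)
  unfold bet
  rw [← hsp]
  rw [← hpq] at hH
  exact hH

lemma bet_triple {p q s : ℕ} (hp : 2*r+1 ≤ p) (hq : 2*r+1 ≤ q) (hs : 2*r+1 ≤ s)
    (hpq : p + q + s = m) :
    bet Δ W p + bet Δ W q + bet Δ W s = 0 := by
  set G := spliceW p q (bridge r W p) (bridge r W q) with hG
  have hGper : ∀ x, G (x + (p+q)) = G x := fun x => spliceW_per _ _ _ _ x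
  have hGagree : ∀ x, x < 2*r+1 → G x = bridge r W s x := by
    intro x hx
    have hxpq : x % (p+q) = x := Nat.mod_eq_of_lt (by omega)
    have hxp : x < p := by omega
    rw [hG]
    show (if x % (p+q) < p then bridge r W p (x % (p+q)) else _) = _
    rw [hxpq, if_pos hxp, bridge_agree W hp hx, bridge_agree W hs hx]
  have hsp := wsum_splice (Δ := Δ) (p := p+q) (q := s) (by omega) hs hGper
    (bridge_per W s) hGagree
  have hsp2 := wsum_splice (Δ := Δ) hp hq (bridge_per W p) (bridge_per W q)
    (fun x hx => by rw [bridge_agree W hp hx, bridge_agree W hq hx])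
  have hH := H (spliceW (p+q) s G (bridge r W s))
    (fun x => by conv in (x + m) => rw [← hpq]
                 exact spliceW_per _ _ _ _ x)
  rw [← hpq] at hH
  rw [hH, hsp2] at hsp
  unfold bet
  linarith

lemma bet_add {p q : ℕ} (hp : 2*r+1 ≤ p) (hq : 2*r+1 ≤ q) (hpq : p + q + (2*r+1) ≤ m) :
    bet Δ W (p+q) = bet Δ W p + bet Δ W q := by
  have h1 := bet_triple Δ W H hp hq (s := m - (p+q)) (by omega) (by omega)
  have h2 := bet_pair Δ W H (p := p+q) (q := m - (p+q)) (by omega) (by omega) (by omega)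
  linarith

lemma bet_zero {p : ℕ} (hm : 4*(2*r+1) ≤ m) (hp : 2*r+1 ≤ p)
    (hpm : p + 2*(2*r+1) ≤ m) :
    bet Δ W p = 0 := by
  have hu1 : 1 ≤ 2*r+1 := by omega
  obtain ⟨u, hu⟩ : ∃ u, u = 2*r+1 := ⟨_, rfl⟩
  obtain ⟨δ, hδ⟩ : ∃ d : ℝ, d = bet Δ W (u+1) - bet Δ W u := ⟨_, rfl⟩
  have step : ∀ s, u ≤ s → s + 1 + 2*u ≤ m → bet Δ W (s+1) = bet Δ W s + δ := by
    intro s hs hsm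
    have e1 : bet Δ W (s+1+u) = bet Δ W (s+1) + bet Δ W u :=
      bet_add Δ W H (p := s+1) (q := u) (by omega) (by omega)
        (show (s+1)+u+(2*r+1) ≤ m by omega)
    have e2 : bet Δ W (s+(u+1)) = bet Δ W s + bet Δ W (u+1) :=
      bet_add Δ W H (p := s) (q := u+1) (by omega) (by omega)
        (show s+(u+1)+(2*r+1) ≤ m by omega)
    have he : s+1+u = s+(u+1) := by omega
    rw [he] at e1
    rw [hδ]; linarith
  have lin : ∀ k, u + k + 2*u ≤ m → bet Δ W (u+k) = bet Δ W u + k * δ := by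
    intro k
    induction k with
    | zero => intro _; simp
    | succ k ih =>
      intro hk
      have hk' : u + k + 2*u ≤ m := by omega
      have hst := step (u+k) (by omega) (by omega)
      rw [show u + (k+1) = (u+k)+1 by omega, hst, ih hk']
      push_cast; ring
  have h2u : bet Δ W (2*u) = 2 * bet Δ W u := by
    have h := bet_add Δ W H (p := u) (q := u) (by omega) (by omega)
      (show u+u+(2*r+1) ≤ m by omega)
    rw [show u + u = 2*u by omega] at h; linarith
  have h2u' : bet Δ W (2*u) = bet Δ W u + u * δ := by
    have h := lin u (by omega)
    rw [show u + u = 2*u by omega] at h; exact h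
  have hbu : bet Δ W u = u * δ := by linarith
  have hlin' : ∀ s, u ≤ s → s + 2*u ≤ m → bet Δ W s = s * δ := by
    intro s hs hsm
    have h := lin (s - u) (by omega)
    rw [show u + (s-u) = s by omega] at h
    rw [h, hbu]
    have hc : ((s : ℝ)) = (u : ℝ) + ((s - u : ℕ) : ℝ) := by
      have h3 : u + (s - u) = s := by omega
      exact_mod_cast (congrArg (fun n : ℕ => (n : ℝ)) h3).symm
    rw [hc]; ring
  have hpair := bet_pair Δ W H (p := 2*u) (q := m - 2*u) (by omega) (by omega) (by omega)
  have ha : bet Δ W (2*u) = ((2*u : ℕ) : ℝ) * δ := hlin' (2*u) (by omega)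
    (show 2*u+2*u ≤ m by omega)
  have hb : bet Δ W (m - 2*u) = ((m - 2*u : ℕ) : ℝ) * δ := hlin' (m-2*u) (by omega) (by omega)
  have hδ0 : δ = 0 := by
    have h1 : ((2*u : ℕ) : ℝ) * δ + ((m - 2*u : ℕ) : ℝ) * δ = 0 := by
      rw [← ha, ← hb]; exact hpair
    have h2 : ((2*u : ℕ) : ℝ) + ((m - 2*u : ℕ) : ℝ) = (m : ℝ) := by
      exact_mod_cast congrArg (fun n : ℕ => (n : ℝ)) (by omega : 2*u + (m - 2*u) = m)
    have h3 : (m : ℝ) * δ = 0 := by rw [← h2, add_mul]; exact h1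
    have hm0 : (m : ℝ) ≠ 0 := Nat.cast_ne_zero.mpr (by omega)
    exact (mul_eq_zero.mp h3).resolve_left hm0
  rw [hlin' p (by omega) (by omega), hδ0]; ring

/-- Transfer of the vanishing of window sums from size `m` down to size `n`. -/
lemma wsum_transfer {n : ℕ} (hn : 2*(2*r+1) ≤ n) (hnm : n + (2*r+1) ≤ m)
    (hm : 4*(2*r+1) ≤ m) (W : ℕ → A) (hW : ∀ x, W (x + n) = W x) :
    wsum r Δ n W = 0 := by
  have hq : 2*r+1 ≤ m - n := by omega
  have hagree : ∀ x, x < 2*r+1 → W x = bridge r W (m-n) x :=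
    fun x hx => (bridge_agree W hq hx).symm
  have hsp := wsum_splice (Δ := Δ) (p := n) (q := m - n) (by omega) hq hW
    (bridge_per W (m-n)) hagree
  have hH := H (spliceW n (m-n) W (bridge r W (m-n)))
    (fun x => by conv in (x + m) => rw [show m = n + (m-n) by omega]
                 exact spliceW_per _ _ _ _ x)
  rw [show n + (m-n) = m by omega] at hsp
  rw [hH] at hsp
  have hb0 : bet Δ W (m - n) = 0 := bet_zero Δ W H hm hq (by omega)
  unfold bet at hb0
  linarith

end beta

/-! ### The bridge between conserved densities and window sums -/

variable {S : Type*} {β α : ℕ} (f : (Fin (2 * β + 1) → S) → S) (γ : S → S → S)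

/-- The local "energy change" function, as a function of the joint
`(α+β)`-window of the pair configuration `(a, b)`. -/
noncomputable def locDelta (ε : (Fin (2 * α + 1) → S) → S → ℝ) :
    (Fin (2 * (α + β) + 1) → S × S) → ℝ := fun w =>
  ε (fun j => γ (f (fun k =>
        (w ⟨(j : ℕ) + (k : ℕ), by have := j.isLt; have := k.isLt; omega⟩).1))
      ((w ⟨(j : ℕ) + β, by have := j.isLt; omega⟩).2))
    ((w ⟨α + β, by omega⟩).1)
  - ε (fun j => (w ⟨(j : ℕ) + β, by have := j.isLt; omega⟩).1)
    ((w ⟨α + β, by omega⟩).2)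

lemma energy_diff {N : ℕ} [NeZero N] (ε : (Fin (2 * α + 1) → S) → S → ℝ)
    (a b : ZMod N → S) :
    totalEnergy ε (secondOrderUpdate f γ a b) a - totalEnergy ε a b
      = ∑ i : ZMod N, locDelta f γ ε (nbhd (α + β) (fun t => (a t, b t)) i) := by
  unfold totalEnergy
  rw [← Finset.sum_sub_distrib]
  refine Finset.sum_congr rfl fun i _ => ?_
  set c : ZMod N → S × S := fun t => (a t, b t) with hc
  have e0 : nbhd (α + β) c i ⟨α + β, by omega⟩ = (a i, b i) := by
    show c (i + ((α + β : ℕ) : ZMod N) - ((α + β : ℕ) : ZMod N)) = _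
    rw [add_sub_cancel_right]
  have e1 : ∀ j : Fin (2 * α + 1),
      nbhd (α + β) c i ⟨(j : ℕ) + β, by have := j.isLt; omega⟩
        = (a (i + ((j : ℕ) : ZMod N) - (α : ZMod N)),
           b (i + ((j : ℕ) : ZMod N) - (α : ZMod N))) := by
    intro j
    show c (i + (((j : ℕ) + β : ℕ) : ZMod N) - ((α + β : ℕ) : ZMod N)) = _
    have h : i + (((j : ℕ) + β : ℕ) : ZMod N) - ((α + β : ℕ) : ZMod N)
        = i + ((j : ℕ) : ZMod N) - (α : ZMod N) := by push_cast; ring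
    rw [h]
  have e2 : ∀ (j : Fin (2 * α + 1)) (k : Fin (2 * β + 1)),
      (nbhd (α + β) c i ⟨(j : ℕ) + (k : ℕ),
          by have := j.isLt; have := k.isLt; omega⟩).1
        = a (i + ((j : ℕ) : ZMod N) - (α : ZMod N) + ((k : ℕ) : ZMod N) - (β : ZMod N)) := by
    intro j k
    show (c (i + (((j : ℕ) + (k : ℕ) : ℕ) : ZMod N) - ((α + β : ℕ) : ZMod N))).1 = _
    have h : i + (((j : ℕ) + (k : ℕ) : ℕ) : ZMod N) - ((α + β : ℕ) : ZMod N)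
        = i + ((j : ℕ) : ZMod N) - (α : ZMod N) + ((k : ℕ) : ZMod N) - (β : ZMod N) := by
      push_cast; ring
    rw [h]
  unfold locDelta
  rw [e0]
  congr 1
  · congr 1
    funext j
    rw [e1 j]
    show secondOrderUpdate f γ a b (i + ((j : ℕ) : ZMod N) - (α : ZMod N)) = _
    unfold secondOrderUpdate
    congr 1
    congr 1
    funext k
    rw [e2 j k]
    rfl
  · congr 1
    funext j
    rw [e1 j]
    rfl

lemma sum_shift {N : ℕ} [NeZero N] {r : ℕ} (g : (Fin (2 * r + 1) → A) → ℝ)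
    (c : ZMod N → A) :
    ∑ i : ZMod N, g (nbhd r c i)
      = ∑ i : ZMod N, g (fun j => c (i + ((j : ℕ) : ZMod N))) := by
  refine Fintype.sum_equiv (Equiv.subRight ((r : ℕ) : ZMod N)) _ _ fun i => ?_
  congr 1
  funext j
  show c (i + ((j : ℕ) : ZMod N) - (r : ZMod N)) = c (i - (r : ZMod N) + ((j : ℕ) : ZMod N))
  congr 1
  ring

lemma sum_zmod_eq_range {N : ℕ} [NeZero N] (h : ZMod N → ℝ) :
    ∑ i : ZMod N, h i = ∑ t ∈ Finset.range N, h ((t : ℕ) : ZMod N) := by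
  refine Finset.sum_nbij' (fun i => i.val) (fun t => ((t : ℕ) : ZMod N))
    (fun i _ => Finset.mem_range.mpr (ZMod.val_lt i)) (fun t _ => Finset.mem_univ _)
    (fun i _ => ZMod.natCast_rightInverse i) (fun t ht => ?_) (fun i _ => ?_)
  · exact ZMod.val_natCast_of_lt (Finset.mem_range.mp ht)
  · rw [ZMod.natCast_rightInverse i]

lemma sum_eq_wsum {r N : ℕ} [NeZero N] (g : (Fin (2 * r + 1) → A) → ℝ)
    (c : ZMod N → A) :
    ∑ i : ZMod N, g (nbhd r c i) = wsum r g N (fun t => c ((t : ℕ) : ZMod N)) := by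
  rw [sum_shift, sum_zmod_eq_range]
  refine Finset.sum_congr rfl fun t ht => ?_
  congr 1
  funext j
  show c _ = c _
  congr 1
  push_cast
  ring

lemma cons_iff {N : ℕ} [NeZero N] (ε : (Fin (2 * α + 1) → S) → S → ℝ) :
    IsConservedDensity N f γ ε ↔
      ∀ C : ℕ → S × S, (∀ x, C (x + N) = C x) →
        wsum (α + β) (locDelta f γ ε) N C = 0 := by
  constructor
  · intro h C hC
    have hd := energy_diff f γ ε (fun i : ZMod N => (C i.val).1) (fun i : ZMod N => (C i.val).2)
    rw [h _ _, sub_self] at hd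
    rw [sum_eq_wsum] at hd
    have heq : (fun t : ℕ => (fun i : ZMod N => ((C i.val).1, (C i.val).2))
        ((t : ℕ) : ZMod N)) = C := by
      funext t
      show ((C ((t : ZMod N)).val).1, (C ((t : ZMod N)).val).2) = C t
      rw [Prod.mk.eta, ZMod.val_natCast]
      exact per_mod hC t
    rw [heq] at hd
    exact hd.symm
  · intro h a b
    have hd := energy_diff f γ ε a b
    rw [sum_eq_wsum] at hd
    have h0 := h (fun t : ℕ => (a ((t : ℕ) : ZMod N), b ((t : ℕ) : ZMod N)))
      (fun x => by
        have hcast : ((x + N : ℕ) : ZMod N) = ((x : ℕ) : ZMod N) := by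
          push_cast [ZMod.natCast_self]; ring
        show (a ((x + N : ℕ) : ZMod N), b ((x + N : ℕ) : ZMod N)) = _
        rw [hcast])
    exact sub_eq_zero.mp (hd.trans h0)

/-- Monotonicity: conservation on a sufficiently larger lattice implies
conservation on the smaller one. -/
lemma psi_subset {N M : ℕ} [NeZero N] [NeZero M]
    (hN : 2*(2*(α+β)+1) ≤ N) (hNM : N + (2*(α+β)+1) ≤ M) (hM : 4*(2*(α+β)+1) ≤ M) :
    psi f γ M α ⊆ psi f γ N α := by
  intro ε hε
  have hε' : IsConservedDensity M f γ ε := hε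
  rw [cons_iff (N := M) f γ ε] at hε'
  show IsConservedDensity N f γ ε
  rw [cons_iff (N := N) f γ ε]
  intro C hC
  exact wsum_transfer (locDelta f γ ε) hε' hN hNM hM C hC

/-- `ψ(f, γ, N, α)` as a submodule of the space of densities. -/
def consSub (N : ℕ) [NeZero N] : Submodule ℝ ((Fin (2 * α + 1) → S) → S → ℝ) where
  carrier := psi f γ N α
  zero_mem' := by
    intro a b
    unfold totalEnergy
    simp
  add_mem' := by
    intro x y hx hy a b
    have kx := hx a b
    have ky := hy a b
    have expand : ∀ (p q : ZMod N → S),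
        totalEnergy (x + y) p q = totalEnergy x p q + totalEnergy y p q := by
      intro p q
      unfold totalEnergy
      rw [← Finset.sum_add_distrib]
      rfl
    rw [expand, expand, kx, ky]
  smul_mem' := by
    intro t x hx a b
    have kx := hx a b
    have expand : ∀ (p q : ZMod N → S),
        totalEnergy (t • x) p q = t * totalEnergy x p q := by
      intro p q
      unfold totalEnergy
      rw [Finset.mul_sum]
      rfl
    rw [expand, expand, kx]

lemma consSub_coe (N : ℕ) [NeZero N] :
    ((consSub (α := α) f γ N : Submodule ℝ ((Fin (2 * α + 1) → S) → S → ℝ)) :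
      Set ((Fin (2 * α + 1) → S) → S → ℝ)) = psi f γ N α := rfl

lemma psi_congr {N M : ℕ} (h : N = M) [NeZero N] [NeZero M] :
    psi f γ N α = psi f γ M α := by subst h; rfl

end PsiStab

/-- Lemma 2: there always exists a positive `N₀` with
`ψ(f, γ, N₀, α) = ψ(f, γ, N₀+1, α)`. -/
theorem exists_psi_stabilization {S : Type*} [Fintype S] {β α : ℕ}
    (f : (Fin (2 * β + 1) → S) → S) (γ : S → S → S) :
    ∃ (N₀ : ℕ) (h : 0 < N₀),
      @psi S β f γ N₀ ⟨h.ne'⟩ α = @psi S β f γ (N₀ + 1) ⟨N₀.succ_ne_zero⟩ α := by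
  classical
  have hfd : FiniteDimensional ℝ ((Fin (2 * α + 1) → S) → S → ℝ) := inferInstance
  -- `u` is the window length of the local energy-change function
  obtain ⟨u, hu⟩ : ∃ u, u = 2*(α+β)+1 := ⟨_, rfl⟩
  have hu1 : 1 ≤ u := by omega
  haveI hnz : ∀ n : ℕ, NeZero (n + 3*u) := fun n => ⟨by omega⟩
  let D : ℕ → ℕ := fun n => Module.finrank ℝ (PsiStab.consSub (α := α) f γ (n + 3*u))
  obtain ⟨n₀, hn₀⟩ := Nat.sInf_mem (⟨D 0, 0, rfl⟩ : (Set.range D).Nonempty)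
  have hmin : ∀ n, D n₀ ≤ D n := fun n => hn₀ ▸ Nat.sInf_le ⟨n, rfl⟩
  have key : ∀ n, n₀ + u ≤ n →
      PsiStab.consSub (α := α) f γ (n + 3*u) = PsiStab.consSub (α := α) f γ (n₀ + 3*u) := by
    intro n hn
    have hle : PsiStab.consSub (α := α) f γ (n + 3*u) ≤ PsiStab.consSub (α := α) f γ (n₀ + 3*u) := by
      intro ε hε
      exact PsiStab.psi_subset f γ (by omega) (by omega) (by omega) hε
    exact Submodule.eq_of_le_of_finrank_le hle (hmin n)
  refine ⟨(n₀ + u) + 3*u, by omega, ?_⟩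
  have h1 := key (n₀ + u) le_rfl
  have h2 := key (n₀ + u + 1) (by omega)
  have h3 : PsiStab.consSub (α := α) f γ ((n₀ + u) + 3*u) = PsiStab.consSub (α := α) f γ ((n₀ + u + 1) + 3*u) :=
    h1.trans h2.symm
  have h4 : psi f γ ((n₀ + u) + 3*u) α = psi f γ ((n₀ + u + 1) + 3*u) α := by
    rw [← PsiStab.consSub_coe, ← PsiStab.consSub_coe, h3]
  calc @psi S β f γ ((n₀ + u) + 3*u) _ α
      = psi f γ ((n₀ + u + 1) + 3*u) α := h4
    _ = @psi S β f γ ((n₀ + u) + 3*u + 1) ⟨Nat.succ_ne_zero _⟩ α :=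
        PsiStab.psi_congr f γ (by omega)
end

section
/- (Main Lemma.) Let γ : S → S → S satisfy (i) γ y (γ y x) = x for all x, y ∈ S, and (ii) γ x (γ y z) = γ y (γ x z) for all x, y, z ∈ S. Let f and g be local rules of neighborhood size β, and let ε be a density of size α that is a conserved density on the lattice of size N for both (f, γ) and (g, γ). Then for all configurations a, b : ZMod N → S and every site i ∈ ZMod N, ε (α-neighborhood of a at i) (γ (f (β-neighborhood of a at i)) (b i)) = ε (α-neighborhood of a at i) (γ (g (β-neighborhood of a at i)) (b i)). -/
/-- Main Lemma: if `ε` is conserved for both `(f, γ)` and `(g, γ)`,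
then the density takes the same value on the `f`-updated and `g`-updated states
at every single site. -/
theorem main_lemma {S : Type*} [Fintype S] {N : ℕ} [NeZero N] {β α : ℕ}
    (γ : S → S → S)
    (hγ1 : ∀ x y : S, γ y (γ y x) = x)
    (hγ2 : ∀ x y z : S, γ x (γ y z) = γ y (γ x z))
    (f g : (Fin (2 * β + 1) → S) → S)
    (ε : (Fin (2 * α + 1) → S) → S → ℝ)
    (hf : IsConservedDensity N f γ ε) (hg : IsConservedDensity N g γ ε)
    (a b : ZMod N → S) (i : ZMod N) :
    ε (nbhd α a i) (γ (f (nbhd β a i)) (b i)) =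
      ε (nbhd α a i) (γ (g (nbhd β a i)) (b i)) := by
  have inv : ∀ (h : (Fin (2 * β + 1) → S) → S) (c : ZMod N → S),
      secondOrderUpdate h γ a (secondOrderUpdate h γ a c) = c := by
    intro h c; funext j; simp [secondOrderUpdate, hγ1]
  have key : ∀ c : ZMod N → S,
      ∑ j : ZMod N, (ε (nbhd α a j) (γ (f (nbhd β a j)) (c j))
        - ε (nbhd α a j) (γ (g (nbhd β a j)) (c j))) = 0 := by
    intro c
    have hfc := hf a (secondOrderUpdate f γ a c)
    have hgc := hg a (secondOrderUpdate g γ a c)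
    rw [inv f c] at hfc
    rw [inv g c] at hgc
    simp only [totalEnergy, secondOrderUpdate] at hfc hgc
    rw [Finset.sum_sub_distrib, ← hfc, ← hgc, sub_self]
  set D : S → ℝ := fun s =>
    ε (nbhd α a i) (γ (f (nbhd β a i)) s) - ε (nbhd α a i) (γ (g (nbhd β a i)) s)
    with hD
  have const : ∀ s : S, D s = D (b i) := by
    intro s
    have h1 := key (Function.update b i s)
    have h2 := key b
    rw [← Finset.add_sum_erase _ _ (Finset.mem_univ i)] at h1 h2
    have hrest : ∀ j ∈ Finset.univ.erase i,
        (ε (nbhd α a j) (γ (f (nbhd β a j)) (Function.update b i s j))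
          - ε (nbhd α a j) (γ (g (nbhd β a j)) (Function.update b i s j)))
        = (ε (nbhd α a j) (γ (f (nbhd β a j)) (b j))
          - ε (nbhd α a j) (γ (g (nbhd β a j)) (b j))) := by
      intro j hj
      rw [Function.update_of_ne (Finset.ne_of_mem_erase hj)]
    rw [Finset.sum_congr rfl hrest] at h1
    simp only [Function.update_self] at h1
    have : D s = D (b i) := by
      simp only [hD]
      linarith [h1, h2]
    exact this
  have hsum : D (γ (f (nbhd β a i)) (b i)) + D (γ (g (nbhd β a i)) (b i)) = 0 := by
    simp only [hD, hγ1]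
    rw [hγ2 (g (nbhd β a i)) (f (nbhd β a i)) (b i)]
    ring
  have e1 := const (γ (f (nbhd β a i)) (b i))
  have e2 := const (γ (g (nbhd β a i)) (b i))
  have : D (b i) = 0 := by linarith
  simpa only [hD, sub_eq_zero] using this
end

section
/- (Main Theorem.) Let S be a finite linearly ordered alphabet and let γ : S → S → S satisfy (i) γ y (γ y x) = x for all x, y ∈ S, and (ii) γ x (γ y z) = γ y (γ x z) for all x, y, z ∈ S. Let f and g be local rules of neighborhood size β and define f ∨ g to be their pointwise maximum, (f ∨ g)(u) = max (f u) (g u). If ε is a density of size α that is a conserved density on the lattice of size N for both (f, γ) and (g, γ), then ε is a conserved density for (f ∨ g, γ) on the lattice of size N. Equivalently, ψ(f, γ, N, α) ∩ ψ(g, γ, N, α) ⊆ ψ(f ∨ g, γ, N, α). -/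
/-- Main Theorem: a common conserved density of `(f, γ)` and
`(g, γ)` is also conserved for the pointwise maximum `f ∨ g`. -/
theorem main_theorem_max {S : Type*} [Fintype S] [LinearOrder S]
    {N : ℕ} [NeZero N] {β α : ℕ}
    (γ : S → S → S)
    (hγ1 : ∀ x y : S, γ y (γ y x) = x)
    (hγ2 : ∀ x y z : S, γ x (γ y z) = γ y (γ x z))
    (f g : (Fin (2 * β + 1) → S) → S)
    (ε : (Fin (2 * α + 1) → S) → S → ℝ)
    (hf : IsConservedDensity N f γ ε) (hg : IsConservedDensity N g γ ε) :
    IsConservedDensity N (fun u => max (f u) (g u)) γ ε := by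
  intro a b
  -- notation
  set εa : ZMod N → S → ℝ := fun i => ε (nbhd α a i) with hεadef
  set F : ZMod N → S := fun i => f (nbhd β a i) with hFdef
  set G : ZMod N → S := fun i => g (nbhd β a i) with hGdef
  -- Step 1: rearranged conservation identities.
  have step1 : ∀ (h : (Fin (2 * β + 1) → S) → S),
      IsConservedDensity N h γ ε →
      ∀ c : ZMod N → S,
        totalEnergy ε c a = ∑ i : ZMod N, εa i (γ (h (nbhd β a i)) (c i)) := by
    intro h hh c
    have hb : secondOrderUpdate h γ a (fun i => γ (h (nbhd β a i)) (c i)) = c := by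
      funext i
      exact hγ1 (c i) (h (nbhd β a i))
    have := hh a (fun i => γ (h (nbhd β a i)) (c i))
    rw [hb] at this
    exact this
  have hfc := step1 f hf
  have hgc := step1 g hg
  -- Step 2: the per-site difference.
  set δ : ZMod N → S → ℝ := fun i x => εa i (γ (F i) x) - εa i (γ (G i) x) with hδdef
  have sumδ : ∀ c : ZMod N → S, ∑ i : ZMod N, δ i (c i) = 0 := by
    intro c
    have h1 := hfc c
    have h2 := hgc c
    have : (∑ i : ZMod N, εa i (γ (F i) (c i)))
        = ∑ i : ZMod N, εa i (γ (G i) (c i)) := by rw [← h1, ← h2]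
    simp only [hδdef, Finset.sum_sub_distrib, this, sub_self]
  -- δ i is constant in its second argument.
  have δconst : ∀ (i : ZMod N) (x y : S), δ i x = δ i y := by
    intro i x y
    have h1 := sumδ (Function.update (fun _ => y) i x)
    have h2 := sumδ (fun _ => y)
    have e1 : ∑ j : ZMod N, δ j (Function.update (fun _ => y) i x j)
        = δ i x + ∑ j ∈ Finset.univ.erase i, δ j y := by
      rw [← Finset.add_sum_erase _ _ (Finset.mem_univ i)]
      simp only [Function.update_self]
      congr 1
      refine Finset.sum_congr rfl fun j hj => ?_
      rw [Function.update_of_ne (Finset.ne_of_mem_erase hj)]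
    have e2 : ∑ j : ZMod N, (δ j y)
        = δ i y + ∑ j ∈ Finset.univ.erase i, δ j y :=
      (Finset.add_sum_erase _ _ (Finset.mem_univ i)).symm
    rw [e1] at h1
    rw [e2] at h2
    linarith
  -- δ i sums to zero over S, since γ s is an involution (hence a bijection).
  have δzero : ∀ (i : ZMod N) (x : S), δ i x = 0 := by
    intro i x
    have hsum : ∑ z : S, δ i z = 0 := by
      have hF : ∑ z : S, εa i (γ (F i) z) = ∑ z : S, εa i z :=
        Fintype.sum_bijective (fun z => γ (F i) z)
          (Function.Involutive.bijective (fun z => hγ1 z (F i)))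
          _ _ (fun z => rfl)
      have hG : ∑ z : S, εa i (γ (G i) z) = ∑ z : S, εa i z :=
        Fintype.sum_bijective (fun z => γ (G i) z)
          (Function.Involutive.bijective (fun z => hγ1 z (G i)))
          _ _ (fun z => rfl)
      simp only [hδdef, Finset.sum_sub_distrib, hF, hG, sub_self]
    have hconst : ∑ z : S, δ i z = (Fintype.card S : ℝ) * δ i x := by
      rw [Finset.sum_congr rfl (fun z _ => δconst i z x)]
      simp [Finset.sum_const, Finset.card_univ, mul_comm]
    have hcard : (0 : ℝ) < (Fintype.card S : ℝ) := by
      have : Nonempty S := ⟨x⟩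
      exact_mod_cast Fintype.card_pos
    rw [hconst] at hsum
    have := mul_eq_zero.mp hsum
    rcases this with h | h
    · exact absurd h (ne_of_gt hcard)
    · exact h
  -- key pointwise identity
  have key : ∀ (i : ZMod N) (x : S), εa i (γ (F i) x) = εa i (γ (G i) x) := by
    intro i x
    have := δzero i x
    simp only [hδdef] at this
    linarith
  -- Main computation.
  set c : ZMod N → S := secondOrderUpdate (fun u => max (f u) (g u)) γ a b with hcdef
  rw [step1 f hf c]
  show (∑ i : ZMod N, εa i (γ (F i) (c i))) = ∑ i : ZMod N, εa i (b i)
  refine Finset.sum_congr rfl fun i _ => ?_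
  have hc : c i = γ (max (F i) (G i)) (b i) := rfl
  rcases max_choice (F i) (G i) with hm | hm
  · rw [hc, hm, hγ1]
  · rw [hc, hm, key i (γ (G i) (b i)), hγ1]
end

section
/- (Selector form of the Main Theorem.) Let γ : S → S → S satisfy (i) γ y (γ y x) = x for all x, y ∈ S, and (ii) γ x (γ y z) = γ y (γ x z) for all x, y, z ∈ S. Let f, g, h be local rules of neighborhood size β such that for every u : Fin (2β+1) → S, either h u = f u or h u = g u. If ε is a density of size α that is a conserved density on the lattice of size N for both (f, γ) and (g, γ), then ε is a conserved density for (h, γ) on the lattice of size N. -/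
/-- selector form of the Main Theorem: if `h` agrees pointwise
with `f` or with `g`, a common conserved density of `(f, γ)` and `(g, γ)` is
also conserved for `(h, γ)`. -/
theorem main_theorem_selector {S : Type*} [Fintype S] {N : ℕ} [NeZero N]
    {β α : ℕ} (γ : S → S → S)
    (hγ1 : ∀ x y : S, γ y (γ y x) = x)
    (hγ2 : ∀ x y z : S, γ x (γ y z) = γ y (γ x z))
    (f g h : (Fin (2 * β + 1) → S) → S)
    (hsel : ∀ u : Fin (2 * β + 1) → S, h u = f u ∨ h u = g u)
    (ε : (Fin (2 * α + 1) → S) → S → ℝ)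
    (hf : IsConservedDensity N f γ ε) (hg : IsConservedDensity N g γ ε) :
    IsConservedDensity N h γ ε := by
  classical
  intro a b
  -- The key reformulation: for any conserved rule `f'`, the energy of any
  -- configuration `x` against base `a` equals the "pulled-back" sum.
  have key : ∀ (f' : (Fin (2 * β + 1) → S) → S), IsConservedDensity N f' γ ε →
      ∀ x : ZMod N → S,
        totalEnergy ε x a
          = ∑ i : ZMod N, ε (nbhd α a i) (γ (f' (nbhd β a i)) (x i)) := by
    intro f' hf' x
    have h0 := hf' a (secondOrderUpdate f' γ a x)
    have h1 : secondOrderUpdate f' γ a (secondOrderUpdate f' γ a x) = x := by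
      funext i
      simp [secondOrderUpdate, hγ1]
    rw [h1] at h0
    exact h0
  -- both pulled-back sums agree, for every x
  have hfg : ∀ x : ZMod N → S,
      ∑ i : ZMod N, ε (nbhd α a i) (γ (f (nbhd β a i)) (x i))
        = ∑ i : ZMod N, ε (nbhd α a i) (γ (g (nbhd β a i)) (x i)) := by
    intro x
    rw [← key f hf x, key g hg x]
  -- the per-site discrepancy is constant in the second argument
  have dconst : ∀ (i : ZMod N) (s t : S),
      ε (nbhd α a i) (γ (f (nbhd β a i)) s) - ε (nbhd α a i) (γ (g (nbhd β a i)) s)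
        = ε (nbhd α a i) (γ (f (nbhd β a i)) t)
            - ε (nbhd α a i) (γ (g (nbhd β a i)) t) := by
    intro i s t
    have h1 := hfg (Function.update (fun _ => t) i s)
    have h2 := hfg (fun _ => t)
    have split : ∀ (F : ZMod N → S → ℝ),
        ∑ j : ZMod N, F j (Function.update (fun _ => t) i s j)
          = F i s + ∑ j ∈ Finset.univ.erase i, F j t := by
      intro F
      rw [← Finset.add_sum_erase _ _ (Finset.mem_univ i)]
      congr 1
      · simp
      · refine Finset.sum_congr rfl ?_
        intro j hj
        rw [Function.update_of_ne (Finset.ne_of_mem_erase hj)]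
    have split2 : ∀ (F : ZMod N → S → ℝ),
        (∑ j : ZMod N, F j t) = F i t + ∑ j ∈ Finset.univ.erase i, F j t := by
      intro F
      rw [← Finset.add_sum_erase _ _ (Finset.mem_univ i)]
    rw [split (fun j u => ε (nbhd α a j) (γ (f (nbhd β a j)) u)),
        split (fun j u => ε (nbhd α a j) (γ (g (nbhd β a j)) u))] at h1
    rw [split2 (fun j u => ε (nbhd α a j) (γ (f (nbhd β a j)) u)),
        split2 (fun j u => ε (nbhd α a j) (γ (g (nbhd β a j)) u))] at h2
    linarith
  -- averaging over the (finite, nonempty) alphabet kills the constant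
  have dzero : ∀ (i : ZMod N) (s : S),
      ε (nbhd α a i) (γ (f (nbhd β a i)) s)
        = ε (nbhd α a i) (γ (g (nbhd β a i)) s) := by
    intro i s
    have hbf : Function.Bijective (γ (f (nbhd β a i))) :=
      Function.Involutive.bijective (fun x => hγ1 x _)
    have hbg : Function.Bijective (γ (g (nbhd β a i))) :=
      Function.Involutive.bijective (fun x => hγ1 x _)
    have sumf : ∑ u : S, ε (nbhd α a i) (γ (f (nbhd β a i)) u)
        = ∑ u : S, ε (nbhd α a i) u :=
      Fintype.sum_bijective _ hbf _ _ (fun u => rfl)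
    have sumg : ∑ u : S, ε (nbhd α a i) (γ (g (nbhd β a i)) u)
        = ∑ u : S, ε (nbhd α a i) u :=
      Fintype.sum_bijective _ hbg _ _ (fun u => rfl)
    have hsum0 : ∑ u : S,
        (ε (nbhd α a i) (γ (f (nbhd β a i)) u)
          - ε (nbhd α a i) (γ (g (nbhd β a i)) u)) = 0 := by
      rw [Finset.sum_sub_distrib, sumf, sumg, sub_self]
    have hconst : ∑ u : S,
        (ε (nbhd α a i) (γ (f (nbhd β a i)) u)
          - ε (nbhd α a i) (γ (g (nbhd β a i)) u))
        = (Fintype.card S : ℝ) *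
            (ε (nbhd α a i) (γ (f (nbhd β a i)) s)
              - ε (nbhd α a i) (γ (g (nbhd β a i)) s)) := by
      rw [Finset.sum_congr rfl (fun u _ => dconst i u s)]
      rw [Finset.sum_const, nsmul_eq_mul]
      rfl
    have hScard : (0 : ℝ) < (Fintype.card S : ℝ) := by
      have : Nonempty S := ⟨a 0⟩
      exact_mod_cast Fintype.card_pos
    have := hconst ▸ hsum0
    have hz : ε (nbhd α a i) (γ (f (nbhd β a i)) s)
        - ε (nbhd α a i) (γ (g (nbhd β a i)) s) = 0 := by
      rcases mul_eq_zero.mp this with h' | h'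
      · exact absurd h' (ne_of_gt hScard)
      · exact h'
    linarith
  -- conclude: evaluate the key identity at the h-updated configuration
  rw [key f hf (secondOrderUpdate h γ a b)]
  show _ = totalEnergy ε a b
  unfold totalEnergy
  refine Finset.sum_congr rfl ?_
  intro i _
  have hupd : secondOrderUpdate h γ a b i = γ (h (nbhd β a i)) (b i) := rfl
  rw [hupd]
  rcases hsel (nbhd β a i) with hc | hc
  · rw [hc, hγ1]
  · rw [hc, dzero i (γ (g (nbhd β a i)) (b i)), hγ1]
end

section
/- (Min version of the Main Theorem.) Let S be a finite linearly ordered alphabet and let γ : S → S → S satisfy (i) γ y (γ y x) = x for all x, y ∈ S, and (ii) γ x (γ y z) = γ y (γ x z) for all x, y, z ∈ S. Let f and g be local rules of neighborhood size β and define f ∧ g to be their pointwise minimum, (f ∧ g)(u) = min (f u) (g u). If ε is a density of size α that is a conserved density on the lattice of size N for both (f, γ) and (g, γ), then ε is a conserved density for (f ∧ g, γ) on the lattice of size N. -/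
/-- min version of the Main Theorem: a common conserved density
of `(f, γ)` and `(g, γ)` is also conserved for the pointwise minimum `f ∧ g`. -/
theorem main_theorem_min {S : Type*} [Fintype S] [LinearOrder S]
    {N : ℕ} [NeZero N] {β α : ℕ}
    (γ : S → S → S)
    (hγ1 : ∀ x y : S, γ y (γ y x) = x)
    (hγ2 : ∀ x y z : S, γ x (γ y z) = γ y (γ x z))
    (f g : (Fin (2 * β + 1) → S) → S)
    (ε : (Fin (2 * α + 1) → S) → S → ℝ)
    (hf : IsConservedDensity N f γ ε) (hg : IsConservedDensity N g γ ε) :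
    IsConservedDensity N (fun u => min (f u) (g u)) γ ε := by
  intro a b
  -- the per-site involution σ i x = γ (f_i) (γ (g_i) x)
  have hσinv : ∀ (i : ZMod N) (x : S),
      γ (f (nbhd β a i)) (γ (g (nbhd β a i))
        (γ (f (nbhd β a i)) (γ (g (nbhd β a i)) x))) = x := by
    intro i x
    rw [hγ2 (g (nbhd β a i)) (f (nbhd β a i)), hγ1, hγ1]
  -- Lemma A: applying σ at every site preserves total energy
  have hA : ∀ c : ZMod N → S,
      totalEnergy ε a (fun i => γ (f (nbhd β a i)) (γ (g (nbhd β a i)) (c i)))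
        = totalEnergy ε a c := by
    intro c
    have h1 := hg a c
    have h2 := hf a (fun i => γ (f (nbhd β a i)) (γ (g (nbhd β a i)) (c i)))
    have heq : secondOrderUpdate f γ a
        (fun i => γ (f (nbhd β a i)) (γ (g (nbhd β a i)) (c i)))
        = secondOrderUpdate g γ a c := by
      funext i
      simp only [secondOrderUpdate]
      rw [hγ1]
    rw [heq, h1] at h2
    exact h2.symm
  -- Lemma B: σ at a single site preserves the local energy term
  have hB : ∀ (c : ZMod N → S) (i : ZMod N),
      ε (nbhd α a i) (γ (f (nbhd β a i)) (γ (g (nbhd β a i)) (c i)))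
        = ε (nbhd α a i) (c i) := by
    intro c i0
    have h1 := hA c
    have h2 := hA (Function.update c i0
      (γ (f (nbhd β a i0)) (γ (g (nbhd β a i0)) (c i0))))
    simp only [totalEnergy] at h1 h2
    rw [← Finset.add_sum_erase _ _ (Finset.mem_univ i0),
        ← Finset.add_sum_erase _ (fun i => ε (nbhd α a i) (c i))
          (Finset.mem_univ i0)] at h1
    rw [← Finset.add_sum_erase _ _ (Finset.mem_univ i0),
        ← Finset.add_sum_erase _
          (fun i => ε (nbhd α a i) (Function.update c i0
            (γ (f (nbhd β a i0)) (γ (g (nbhd β a i0)) (c i0))) i))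
          (Finset.mem_univ i0)] at h2
    have herase : ∀ (G : ZMod N → S → ℝ),
        (∑ i ∈ Finset.univ.erase i0, G i (Function.update c i0
          (γ (f (nbhd β a i0)) (γ (g (nbhd β a i0)) (c i0))) i))
        = ∑ i ∈ Finset.univ.erase i0, G i (c i) := by
      intro G
      refine Finset.sum_congr rfl fun i hi => ?_
      rw [Function.update_of_ne (Finset.ne_of_mem_erase hi)]
    rw [herase (fun i x => ε (nbhd α a i) (γ (f (nbhd β a i)) (γ (g (nbhd β a i)) x))),
        herase (fun i x => ε (nbhd α a i) x)] at h2
    simp only [Function.update_self] at h2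
    rw [hσinv] at h2
    linarith [h1, h2]
  -- main computation
  have heq2 : secondOrderUpdate (fun u => min (f u) (g u)) γ a b
      = secondOrderUpdate f γ a
        (fun i => γ (f (nbhd β a i)) (γ (min (f (nbhd β a i)) (g (nbhd β a i))) (b i))) := by
    funext i
    simp only [secondOrderUpdate]
    rw [hγ1]
  rw [heq2,
    hf a (fun i => γ (f (nbhd β a i)) (γ (min (f (nbhd β a i)) (g (nbhd β a i))) (b i)))]
  simp only [totalEnergy]
  refine Finset.sum_congr rfl fun i _ => ?_
  rcases min_choice (f (nbhd β a i)) (g (nbhd β a i)) with h | h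
  · rw [h, hγ1]
  · rw [h]
    exact hB b i
end

section
/- (Conjecture 1 / Eq. (1) of the paper, proved as a corollary of the Main Theorem.) Let S be a finite linearly ordered alphabet and let γ : S → S → S satisfy (i) γ y (γ y x) = x for all x, y ∈ S, and (ii) γ x (γ y z) = γ y (γ x z) for all x, y, z ∈ S. Let f and g be local rules of neighborhood size β with the same set of conserved densities, ψ(f, γ, N, α) = ψ(g, γ, N, α). Then ψ(f, γ, N, α) ⊆ ψ(f ∨ g, γ, N, α), where f ∨ g is the pointwise maximum of f and g. -/
/-- `F_{f,γ}(a, ·)` is an involution when `γ y` is an involution for every `y`. -/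
lemma secondOrderUpdate_involutive {S : Type*} {N : ℕ} {β : ℕ}
    (f : (Fin (2 * β + 1) → S) → S) (γ : S → S → S)
    (hγ1 : ∀ x y : S, γ y (γ y x) = x) (a b : ZMod N → S) :
    secondOrderUpdate f γ a (secondOrderUpdate f γ a b) = b := by
  funext i
  simp [secondOrderUpdate, hγ1]

/-- Conservation is equivalent to `E(a, F(a,b)) = E(b, a)` for all `a, b`. -/
lemma isConservedDensity_iff {S : Type*} {N : ℕ} [NeZero N] {β α : ℕ}
    (f : (Fin (2 * β + 1) → S) → S) (γ : S → S → S)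
    (hγ1 : ∀ x y : S, γ y (γ y x) = x)
    (ε : (Fin (2 * α + 1) → S) → S → ℝ) :
    IsConservedDensity N f γ ε ↔
      ∀ a b : ZMod N → S,
        totalEnergy ε a (secondOrderUpdate f γ a b) = totalEnergy ε b a := by
  constructor
  · intro h a b
    have h2 := h a (secondOrderUpdate f γ a b)
    rw [secondOrderUpdate_involutive f γ hγ1] at h2
    exact h2.symm
  · intro h a b
    have h2 := h a (secondOrderUpdate f γ a b)
    rw [secondOrderUpdate_involutive f γ hγ1] at h2
    exact h2.symm

/-- Key local identity: if `ε` is conserved for both `f` and `g`, then at every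
site the energy contribution through `γ (f u)` and through `γ (g u)` coincide. -/
lemma local_identity {S : Type*} [Fintype S] [Nonempty S]
    {N : ℕ} [NeZero N] {β α : ℕ}
    (γ : S → S → S) (hγ1 : ∀ x y : S, γ y (γ y x) = x)
    (f g : (Fin (2 * β + 1) → S) → S)
    (ε : (Fin (2 * α + 1) → S) → S → ℝ)
    (hf : IsConservedDensity N f γ ε) (hg : IsConservedDensity N g γ ε)
    (a : ZMod N → S) (i : ZMod N) (x : S) :
    ε (nbhd α a i) (γ (f (nbhd β a i)) x) = ε (nbhd α a i) (γ (g (nbhd β a i)) x) := by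
  have hf' := (isConservedDensity_iff f γ hγ1 ε).mp hf
  have hg' := (isConservedDensity_iff g γ hγ1 ε).mp hg
  -- D j y = difference of the two energy contributions at site j with value y
  set D : ZMod N → S → ℝ := fun j y =>
    ε (nbhd α a j) (γ (f (nbhd β a j)) y) - ε (nbhd α a j) (γ (g (nbhd β a j)) y) with hD
  -- the sum of D over all sites vanishes, for every configuration b
  have hsum : ∀ b : ZMod N → S, ∑ j : ZMod N, D j (b j) = 0 := by
    intro b
    have h1 := hf' a b
    have h2 := hg' a b
    have h3 : totalEnergy ε a (secondOrderUpdate f γ a b)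
        = totalEnergy ε a (secondOrderUpdate g γ a b) := by rw [h1, h2]
    simp only [totalEnergy, secondOrderUpdate] at h3
    simp only [hD, Finset.sum_sub_distrib, h3, sub_self]
  -- D j is a constant function, for every site j
  have hconst : ∀ (b0 : ZMod N → S) (y z : S), D i y = D i z := by
    intro b0 y z
    have h1 := hsum (Function.update b0 i y)
    have h2 := hsum (Function.update b0 i z)
    have e1 : ∀ w : S, (fun j => D j (Function.update b0 i w j))
        = Function.update (fun j => D j (b0 j)) i (D i w) := by
      intro w
      funext j
      by_cases hj : j = i
      · subst hj; simp
      · simp [Function.update_of_ne hj]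
    rw [show (∑ j : ZMod N, D j (Function.update b0 i y j))
        = ∑ j : ZMod N, Function.update (fun j => D j (b0 j)) i (D i y) j from by
          rw [← e1 y]] at h1
    rw [show (∑ j : ZMod N, D j (Function.update b0 i z j))
        = ∑ j : ZMod N, Function.update (fun j => D j (b0 j)) i (D i z) j from by
          rw [← e1 z]] at h2
    rw [Finset.sum_update_of_mem (Finset.mem_univ i)] at h1 h2
    have := h1.trans h2.symm
    linarith
  -- summing D i over all of S gives 0, since γ c is a bijection
  have hbij : ∀ c : S, Function.Bijective (γ c) :=
    fun c => Function.Involutive.bijective (fun x => hγ1 x c)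
  have hsumS : ∑ y : S, D i y = 0 := by
    simp only [hD, Finset.sum_sub_distrib]
    rw [Fintype.sum_bijective (γ (f (nbhd β a i))) (hbij _)
        (fun y => ε (nbhd α a i) (γ (f (nbhd β a i)) y)) (ε (nbhd α a i)) (fun y => rfl),
      Fintype.sum_bijective (γ (g (nbhd β a i))) (hbij _)
        (fun y => ε (nbhd α a i) (γ (g (nbhd β a i)) y)) (ε (nbhd α a i)) (fun y => rfl),
      sub_self]
  -- hence D i x = 0
  have hcard : (0 : ℕ) < Fintype.card S := Fintype.card_pos
  have : (Fintype.card S : ℝ) * D i x = 0 := by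
    rw [← hsumS]
    rw [Finset.sum_congr rfl (fun y _ => hconst (fun _ => x) y x)]
    simp [mul_comm]
  have hx : D i x = 0 := by
    have hne : (Fintype.card S : ℝ) ≠ 0 := by positivity
    exact (mul_eq_zero.mp this).resolve_left hne
  simpa [hD, sub_eq_zero] using hx

/-- Conjecture 1 / Eq. (1): if `f` and `g` have the same set of
conserved densities, then `ψ(f) ⊆ ψ(f ∨ g)`. -/
theorem conjecture_one {S : Type*} [Fintype S] [LinearOrder S]
    {N : ℕ} [NeZero N] {β α : ℕ}
    (γ : S → S → S)
    (hγ1 : ∀ x y : S, γ y (γ y x) = x)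
    (hγ2 : ∀ x y z : S, γ x (γ y z) = γ y (γ x z))
    (f g : (Fin (2 * β + 1) → S) → S)
    (hfg : psi f γ N α = psi g γ N α) :
    psi f γ N α ⊆ psi (fun u => max (f u) (g u)) γ N α := by
  intro ε hε
  rcases isEmpty_or_nonempty S with hS | hS
  · intro a b
    exact (IsEmpty.false (a 0)).elim
  · have hεf : IsConservedDensity N f γ ε := hε
    have hεg' : ε ∈ psi g γ N α := hfg ▸ hε
    have hεg : IsConservedDensity N g γ ε := hεg'
    have key := local_identity γ hγ1 f g ε hεf hεg
    show IsConservedDensity N (fun u => max (f u) (g u)) γ ε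
    rw [isConservedDensity_iff _ γ hγ1]
    intro a b
    have hf' := (isConservedDensity_iff f γ hγ1 ε).mp hεf a b
    rw [← hf']
    simp only [totalEnergy, secondOrderUpdate]
    refine Finset.sum_congr rfl (fun i _ => ?_)
    rcases max_choice (f (nbhd β a i)) (g (nbhd β a i)) with h | h
    · rw [h]
    · rw [h, ← key a i (b i)]
end
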